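/- arXiv:2506.17058 — 8 statements merged into one kernel-verified Lean document; each statement's English description precedes it below -/
import Mathlib

section
/- For every agent i, a scalar π satisfies π ∈ 𝒲_i together with π ≤ b_i(x*) for every optimal allocation x* ∈ 𝒳*(b) if and only if 0 ≤ π ≤ V_w(N) − V_w(N∖{i}). (In words: within the range of discounts bounded by the agent's bid on every optimal allocation, the set of optimality-preserving discounts for agent i is exactly the interval from 0 to its VCG discount.) -/
open Finset

variable {X N : Type*}

/-- `x` is an optimal allocation for the bid profile `b`. -/
def Optimal [Fintype N] (b : N → X → ℝ) (x : X) : Prop :=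
  ∀ y : X, ∑ i, b i y ≤ ∑ i, b i x

/-- Agent `i` is winning: it wins in some optimal allocation. -/
def Winning [Fintype N] (v b : N → X → ℝ) (i : N) : Prop :=
  ∃ x, Optimal b x ∧ 0 < v i x

/-- Agent `i` is losing: it loses in some optimal allocation. -/
def Losing [Fintype N] (v b : N → X → ℝ) (i : N) : Prop :=
  ∃ x, Optimal b x ∧ ¬ 0 < v i x

/-- The bid `b` discounted by `π`. -/
def Disc (b : X → ℝ) (π : ℝ) : X → ℝ := fun x => max (b x - π) 0

/-- `c` is a raised bid of `b` (with valuation `v`) with raise `μ`. -/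
def IsRaised (v b : X → ℝ) (μ : ℝ) (c : X → ℝ) : Prop :=
  (∀ x, 0 < b x → c x = b x + μ) ∧
  (∀ x, b x = 0 → 0 ≤ c x ∧ c x ≤ μ) ∧
  (∀ x, ¬ 0 < v x → c x = 0)

/-- The coalitional value `V_w(S)`: the maximum over allocations of the total bid of `S`. -/
def Vw [Fintype X] [Nonempty X] (b : N → X → ℝ) (S : Finset N) : ℝ :=
  Finset.univ.sup' Finset.univ_nonempty fun x => ∑ i ∈ S, b i x

/-- `r` is the coalitional value `V_ℓ(S)`: the maximum total bid over allocations in which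
every agent outside `S` wins. -/
def VlVal [Fintype N] (v b : N → X → ℝ) (S : Finset N) (r : ℝ) : Prop :=
  IsGreatest {r : ℝ | ∃ x : X, (∀ i, i ∉ S → 0 < v i x) ∧ r = ∑ i, b i x} r

/-- `r` is the bicooperative coalitional value `V(S,T)`: the maximum of the total bid of
`S ∪ T` over allocations in which every agent of `T` wins. -/
def VVal [DecidableEq N] (v b : N → X → ℝ) (S T : Finset N) (r : ℝ) : Prop :=
  IsGreatest {r : ℝ | ∃ x : X, (∀ i ∈ T, 0 < v i x) ∧ r = ∑ i ∈ S ∪ T, b i x} r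

/-- `π`, `μ` are valid discounts and raises. -/
def Valid [Fintype N] (v b : N → X → ℝ) (π μ : N → ℝ) : Prop :=
  (∀ i, 0 ≤ π i) ∧ (∀ i, 0 ≤ μ i) ∧
  (∀ i, Winning v b i → μ i = 0 ∧ ∀ x, Optimal b x → π i ≤ b i x) ∧
  (∀ i, Losing v b i → π i = 0)

/-- Agent-free-disposal. -/
def AFD [Fintype N] [DecidableEq N] (v : N → X → ℝ) : Prop :=
  ∀ b' : N → X → ℝ, (∀ i x, 0 ≤ b' i x ∧ b' i x ≤ v i x) →
    ∀ S : Finset N, ∀ x : X, ∃ x' : X,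
      (∑ i ∈ univ \ S, b' i x ≤ ∑ i ∈ univ \ S, b' i x') ∧ ∀ i ∈ S, ¬ 0 < v i x'

/-- The core `𝒞(N, V_w)`. -/
def CoreW [Fintype X] [Nonempty X] [Fintype N] [DecidableEq N]
    (b : N → X → ℝ) (π : N → ℝ) : Prop :=
  (∀ i, 0 ≤ π i) ∧ ∀ S : Finset N, ∑ i ∈ S, π i ≤ Vw b univ - Vw b (univ \ S)

/-- The core `𝒞(N, V_ℓ)`. -/
def CoreL [Fintype N] [DecidableEq N] (v b : N → X → ℝ) (μ : N → ℝ) : Prop :=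
  (∀ i, 0 ≤ μ i) ∧ ∀ (S : Finset N) (rN rS : ℝ),
    VlVal v b univ rN → VlVal v b (univ \ S) rS → ∑ i ∈ S, μ i ≤ rN - rS

/-- The bicore `𝒞₂(N, V)`. -/
def Bicore [Fintype N] [DecidableEq N] (v b : N → X → ℝ) (π μ : N → ℝ) : Prop :=
  (∀ i, 0 ≤ π i) ∧ (∀ i, 0 ≤ μ i) ∧
  ∀ (S T : Finset N) (rN r : ℝ),
    VVal v b univ ∅ rN → VVal v b (univ \ S) T r →
      ∑ i ∈ S, π i + ∑ j ∈ T, μ j ≤ rN - r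

/-
Discounting agent `i` by `π` turns the total bid at `y` into `max (∑ b y - π) (∑_{j ≠ i} b j y)`.
At an optimal allocation `x` with `π ≤ b i x` this is `V_w(N) - π`, and the first term never
exceeds that anywhere, so `x` stays optimal exactly when `V_w(N \ {i}) ≤ V_w(N) - π`.
The side condition `π ≤ b i x` is automatic below the VCG discount, since
`V_w(N) - V_w(N \ {i}) ≤ b i x` at every optimal `x`.
-/

open Function

theorem sum_update_disc [Fintype N] [DecidableEq N] (b : N → X → ℝ) (i : N) (π : ℝ) (y : X) :
    ∑ j, update b i (Disc (b i) π) j y = max (∑ j, b j y - π) (∑ j ∈ univ \ {i}, b j y) := by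
  have hrest : ∑ j ∈ univ \ {i}, update b i (Disc (b i) π) j y = ∑ j ∈ univ \ {i}, b j y :=
    sum_congr rfl fun j hj => by rw [update_of_ne (by simpa using hj)]
  rw [sum_eq_add_sum_sdiff_singleton_of_mem (mem_univ i), hrest, update_self, Disc, max_add,
    sum_eq_add_sum_sdiff_singleton_of_mem (mem_univ i) fun j => b j y]
  ring_nf

section

variable [Fintype X] [Nonempty X] (b : N → X → ℝ)

theorem le_Vw (S : Finset N) (x : X) : ∑ j ∈ S, b j x ≤ Vw b S :=
  le_sup' (fun y => ∑ j ∈ S, b j y) (mem_univ x)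

theorem Vw_le_iff (S : Finset N) (r : ℝ) : Vw b S ≤ r ↔ ∀ x, ∑ j ∈ S, b j x ≤ r := by
  simp [Vw, sup'_le_iff]

variable [Fintype N]

theorem exists_optimal : ∃ x, Optimal b x := by
  obtain ⟨x, -, hx⟩ := exists_max_image univ (fun y => ∑ j, b j y) univ_nonempty
  exact ⟨x, fun y => hx y (mem_univ y)⟩

variable {b}

theorem Optimal.sum_eq_Vw {x : X} (hx : Optimal b x) : ∑ j, b j x = Vw b univ :=
  le_antisymm (le_Vw b univ x) ((Vw_le_iff b univ _).2 hx)

variable [DecidableEq N]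

theorem Optimal.Vw_sub_Vw_le {x : X} (hx : Optimal b x) (i : N) :
    Vw b univ - Vw b (univ \ {i}) ≤ b i x := by
  linarith [hx.sum_eq_Vw, le_Vw b (univ \ {i}) x,
    sum_eq_add_sum_sdiff_singleton_of_mem (mem_univ i) fun j => b j x]

theorem Optimal.optimal_update_disc_iff {x : X} (hx : Optimal b x) {i : N} {π : ℝ}
    (hπ : π ≤ b i x) :
    Optimal (update b i (Disc (b i) π)) x ↔ Vw b (univ \ {i}) ≤ Vw b univ - π := by
  have hx' : ∑ j, update b i (Disc (b i) π) j x = Vw b univ - π := by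
    rw [sum_update_disc, hx.sum_eq_Vw, max_eq_left]
    linarith [hx.sum_eq_Vw, sum_eq_add_sum_sdiff_singleton_of_mem (mem_univ i) fun j => b j x]
  simp only [Optimal, hx', sum_update_disc, max_le_iff, Vw_le_iff]
  exact forall_congr' fun y => and_iff_right (by linarith [le_Vw b univ y])

end

theorem stmt0_general [Fintype X] [Nonempty X] [Fintype N] [DecidableEq N]
    (b : N → X → ℝ)
    (i : N) (π : ℝ) :
    ((0 ≤ π ∧
        ∀ b' : N → X → ℝ, b' i = Disc (b i) π → (∀ j, j ≠ i → b' j = b j) →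
          ∀ x, Optimal b x → Optimal b' x) ∧
      ∀ x, Optimal b x → π ≤ b i x) ↔
      0 ≤ π ∧ π ≤ Vw b univ - Vw b (univ \ {i}) := by
  constructor
  · rintro ⟨⟨hπ, hpres⟩, hπb⟩
    obtain ⟨x, hx⟩ := exists_optimal b
    have hx' := hpres _ (update_self i _ b) (fun j hj => update_of_ne hj _ b) x hx
    exact ⟨hπ, by linarith [(hx.optimal_update_disc_iff (hπb x hx)).1 hx']⟩
  · rintro ⟨hπ, hπle⟩
    have hπb : ∀ x, Optimal b x → π ≤ b i x := fun x hx => hπle.trans (hx.Vw_sub_Vw_le i)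
    refine ⟨⟨hπ, fun b' hb'i hb'j x hx => ?_⟩, hπb⟩
    obtain rfl : b' = update b i (Disc (b i) π) := eq_update_iff.2 ⟨hb'i, hb'j⟩
    exact (hx.optimal_update_disc_iff (hπb x hx)).2 (by linarith)

/-- within the range of discounts bounded by the agent's bid on every optimal
allocation, the set of optimality-preserving discounts for agent `i` is exactly the interval
from `0` to its VCG discount `V_w(N) - V_w(N \ {i})`. -/
theorem stmt0 [Fintype X] [Nonempty X] [Fintype N] [Nonempty N] [DecidableEq N]
    (v b : N → X → ℝ)
    (hb : ∀ i x, 0 ≤ b i x ∧ b i x ≤ v i x)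
    (hsupp : ∀ i, ∃ x, 0 < v i x)
    (hafd : AFD v)
    (i : N) (π : ℝ) :
    ((0 ≤ π ∧
        ∀ b' : N → X → ℝ, b' i = Disc (b i) π → (∀ j, j ≠ i → b' j = b j) →
          ∀ x, Optimal b x → Optimal b' x) ∧
      ∀ x, Optimal b x → π ≤ b i x) ↔
      0 ≤ π ∧ π ≤ Vw b univ - Vw b (univ \ {i}) :=
  stmt0_general b i π
end

section
/- Suppose agent i loses in every optimal allocation, i.e., x* ∉ supp v_i for every x* ∈ 𝒳*(b). Then ℒ_i = {μ : 0 ≤ μ ≤ V_ℓ(N) − V_ℓ(N∖{i})}; that is, a raise μ ≥ 0 preserves the optimality of every optimal allocation under every admissible raised bid of agent i if and only if μ is at most the VCG raise V_ℓ(N) − V_ℓ(N∖{i}). -/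
open Finset

variable {X N : Type*}

/-!
The welfare `V_ℓ(N)` is the optimal total bid, attained at every optimal allocation, where
agent `i` loses and so both bids `b i` and `c` vanish. Raising `i`'s bid by `μ` increases the
total bid only at allocations where `i` wins, and those have total bid at most `V_ℓ(N \ {i})`.
Hence `μ ≤ V_ℓ(N) - V_ℓ(N \ {i})` keeps every optimal allocation optimal; conversely, the
largest raised bid, applied at an allocation attaining `V_ℓ(N \ {i})`, shows the bound is sharp.
-/

open Function

noncomputable def topRaise (v b : X → ℝ) (μ : ℝ) : X → ℝ :=
  fun x => if 0 < v x then b x + μ else 0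

lemma isRaised_topRaise {v b : X → ℝ} {μ : ℝ} (hb : ∀ x, 0 ≤ b x ∧ b x ≤ v x)
    (hμ : 0 ≤ μ) : IsRaised v b μ (topRaise v b μ) := by
  refine ⟨fun x hx => if_pos (hx.trans_le (hb x).2), fun x hx => ?_, fun x hx => if_neg hx⟩
  unfold topRaise
  split_ifs <;> constructor <;> linarith

lemma IsRaised.le_add {v b c : X → ℝ} {μ : ℝ} (h : IsRaised v b μ c) (hb : ∀ x, 0 ≤ b x)
    (x : X) : c x ≤ b x + μ := by
  rcases (hb x).lt_or_eq with hpos | hzero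
  · exact (h.1 x hpos).le
  · linarith [(h.2.1 x hzero.symm).2]

lemma eq_zero_of_not_pos {v b : X → ℝ} (hb : ∀ x, 0 ≤ b x ∧ b x ≤ v x) {x : X}
    (hx : ¬ 0 < v x) : b x = 0 :=
  le_antisymm ((hb x).2.trans (not_lt.mp hx)) (hb x).1

lemma sum_update_apply [Fintype N] [DecidableEq N] (b : N → X → ℝ) (i : N) (c : X → ℝ)
    (z : X) : ∑ j, update b i c j z = ∑ j, b j z - b i z + c z := by
  have hfst := Fintype.sum_eq_add_sum_compl i fun j => update b i c j z
  have hsnd := Fintype.sum_eq_add_sum_compl i fun j => b j z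
  have hrest : ∑ j ∈ {i}ᶜ, update b i c j z = ∑ j ∈ {i}ᶜ, b j z :=
    Finset.sum_congr rfl fun j hj => by rw [update_of_ne (by simpa using hj)]
  simp only [update_self] at hfst
  linarith

namespace VlVal

variable [Fintype N] {v b : N → X → ℝ} {S : Finset N} {r : ℝ}

lemma exists_sum_eq (h : VlVal v b S r) :
    ∃ x, (∀ j, j ∉ S → 0 < v j x) ∧ ∑ j, b j x = r := by
  obtain ⟨x, hx, hr⟩ := h.1
  exact ⟨x, hx, hr.symm⟩

lemma sum_le (h : VlVal v b S r) {y : X} (hy : ∀ j, j ∉ S → 0 < v j y) : ∑ j, b j y ≤ r :=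
  h.2 ⟨y, hy, rfl⟩

lemma sum_le_of_univ (h : VlVal v b univ r) (y : X) : ∑ j, b j y ≤ r :=
  h.sum_le fun j hj => absurd (mem_univ j) hj

lemma optimal_iff (h : VlVal v b univ r) {x : X} : Optimal b x ↔ ∑ j, b j x = r := by
  obtain ⟨x₀, -, hx₀⟩ := h.exists_sum_eq
  exact ⟨fun hx => (h.sum_le_of_univ x).antisymm (hx₀ ▸ hx x₀),
    fun hx y => hx ▸ h.sum_le_of_univ y⟩

lemma sum_le_of_pos [DecidableEq N] {i : N} (h : VlVal v b (univ \ {i}) r) {y : X}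
    (hy : 0 < v i y) : ∑ j, b j y ≤ r :=
  h.sum_le fun j hj => by rwa [show j = i by simpa using hj]

end VlVal

section LosingAgent

variable [Fintype N] [DecidableEq N] {v b : N → X → ℝ} {i : N} {VlN Vli μ : ℝ}
  {c : X → ℝ} {x : X}

lemma optimal_update_of_le_sub (hb : ∀ x, 0 ≤ b i x ∧ b i x ≤ v i x)
    (hVlN : VlVal v b univ VlN) (hVli : VlVal v b (univ \ {i}) Vli) (hμ : μ ≤ VlN - Vli)
    (hc : IsRaised (v i) (b i) μ c) (hx : Optimal b x) (hxi : ¬ 0 < v i x) :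
    Optimal (update b i c) x := by
  intro y
  rw [sum_update_apply, sum_update_apply, eq_zero_of_not_pos hb hxi, hc.2.2 x hxi,
    hVlN.optimal_iff.1 hx]
  by_cases hyi : 0 < v i y
  · linarith [hVli.sum_le_of_pos hyi, hc.le_add (fun x => (hb x).1) y]
  · rw [eq_zero_of_not_pos hb hyi, hc.2.2 y hyi]
    linarith [hVlN.sum_le_of_univ y]

lemma le_sub_of_optimal_update_topRaise (hb : ∀ x, 0 ≤ b i x ∧ b i x ≤ v i x)
    (hVlN : VlVal v b univ VlN) (hVli : VlVal v b (univ \ {i}) Vli)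
    (hx : Optimal b x) (hxi : ¬ 0 < v i x)
    (hopt : Optimal (update b i (topRaise (v i) (b i) μ)) x) :
    μ ≤ VlN - Vli := by
  obtain ⟨y, hy, hyVli⟩ := hVli.exists_sum_eq
  have hyi : 0 < v i y := hy i (by simp)
  have hxy := hopt y
  rw [sum_update_apply, sum_update_apply, eq_zero_of_not_pos hb hxi,
    hVlN.optimal_iff.1 hx, hyVli] at hxy
  simp only [topRaise, if_pos hyi, if_neg hxi] at hxy
  linarith

end LosingAgent

theorem stmt1_general [Fintype N] [DecidableEq N]
    (v b : N → X → ℝ)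
    (hb : ∀ i x, 0 ≤ b i x ∧ b i x ≤ v i x)
    (i : N) (hlose : ∀ x, Optimal b x → ¬ 0 < v i x)
    (VlN Vli : ℝ)
    (hVlN : VlVal v b univ VlN)
    (hVli : VlVal v b (univ \ {i}) Vli)
    (μ : ℝ) :
    (0 ≤ μ ∧
      ∀ c : X → ℝ, IsRaised (v i) (b i) μ c →
        ∀ b' : N → X → ℝ, b' i = c → (∀ j, j ≠ i → b' j = b j) →
          ∀ x, Optimal b x → Optimal b' x) ↔
      0 ≤ μ ∧ μ ≤ VlN - Vli := by
  constructor
  · rintro ⟨hμ, hpreserve⟩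
    obtain ⟨x₀, -, hx₀⟩ := hVlN.exists_sum_eq
    have hopt : Optimal b x₀ := hVlN.optimal_iff.2 hx₀
    refine ⟨hμ, le_sub_of_optimal_update_topRaise (hb i) hVlN hVli hopt (hlose x₀ hopt) ?_⟩
    exact hpreserve _ (isRaised_topRaise (hb i) hμ) _ (update_self i _ b)
      (fun j hj => update_of_ne hj _ b) x₀ hopt
  · rintro ⟨hμ, hle⟩
    refine ⟨hμ, fun c hc b' hb'i hb'j x hx => ?_⟩
    obtain rfl : b' = update b i c := eq_update_iff.2 ⟨hb'i, hb'j⟩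
    exact optimal_update_of_le_sub (hb i) hVlN hVli hle hc hx (hlose x hx)

/-- if agent `i` loses in every optimal allocation, then a raise `μ ≥ 0`
preserves the optimality of every optimal allocation under every admissible raised bid of
agent `i` if and only if `μ` is at most the VCG raise `V_ℓ(N) - V_ℓ(N \ {i})`. -/
theorem stmt1 [Fintype X] [Nonempty X] [Fintype N] [Nonempty N] [DecidableEq N]
    (v b : N → X → ℝ)
    (hb : ∀ i x, 0 ≤ b i x ∧ b i x ≤ v i x)
    (hsupp : ∀ i, ∃ x, 0 < v i x)
    (i : N) (hlose : ∀ x, Optimal b x → ¬ 0 < v i x)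
    (VlN Vli : ℝ)
    (hVlN : VlVal v b univ VlN)
    (hVli : VlVal v b (univ \ {i}) Vli)
    (μ : ℝ) :
    (0 ≤ μ ∧
      ∀ c : X → ℝ, IsRaised (v i) (b i) μ c →
        ∀ b' : N → X → ℝ, b' i = c → (∀ j, j ≠ i → b' j = b j) →
          ∀ x, Optimal b x → Optimal b' x) ↔
      0 ≤ μ ∧ μ ≤ VlN - Vli :=
  stmt1_general v b hb i hlose VlN Vli hVlN hVli μ
end

section
/- If for every agent i we have 0 ≤ π_i ≤ V_w(N) − V_w(N∖{i}) and 0 ≤ μ_i ≤ V_ℓ(N) − V_ℓ(N∖{i}), then the vectors π and μ are valid discounts and raises; in particular, μ_i = 0 for every winning agent i, π_i = 0 for every losing agent i, and π_i ≤ b_i(x*) for every agent i and every optimal allocation x* ∈ 𝒳*(b). -/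
open Finset

variable {X N : Type*}

section

variable {v b : N → X → ℝ}

lemma sum_le_Vw [Fintype X] [Nonempty X] (S : Finset N) (x : X) :
    ∑ i ∈ S, b i x ≤ Vw b S :=
  Finset.le_sup' (fun y => ∑ i ∈ S, b i y) (mem_univ x)

variable [Fintype N]

lemma Vw_univ_eq_sum_of_optimal [Fintype X] [Nonempty X] {x : X} (hx : Optimal b x) :
    Vw b univ = ∑ i, b i x :=
  le_antisymm (Finset.sup'_le _ _ fun y _ => hx y) (sum_le_Vw univ x)

lemma Vw_univ_sub_Vw_sdiff_singleton_le [Fintype X] [Nonempty X] [DecidableEq N]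
    {x : X} (hx : Optimal b x) (i : N) :
    Vw b univ - Vw b (univ \ {i}) ≤ b i x := by
  have hsplit : ∑ j, b j x = ∑ j ∈ univ \ {i}, b j x + b i x := by
    rw [← sum_sdiff (subset_univ {i}), sum_singleton]
  linarith [Vw_univ_eq_sum_of_optimal hx, sum_le_Vw (b := b) (univ \ {i}) x]

lemma VlVal.le_sum_of_optimal {S : Finset N} {r : ℝ} (hr : VlVal v b S r) {x : X}
    (hx : Optimal b x) : r ≤ ∑ i, b i x := by
  obtain ⟨y, -, rfl⟩ := hr.1
  exact hx y

lemma VlVal.sum_le_s2 {S : Finset N} {r : ℝ} (hr : VlVal v b S r) {x : X}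
    (hx : ∀ i, i ∉ S → 0 < v i x) : ∑ i, b i x ≤ r :=
  hr.2 ⟨x, hx, rfl⟩

lemma VlVal.sub_nonpos_of_winning [DecidableEq N] {VlN Vli : ℝ} (hVlN : VlVal v b univ VlN)
    {i : N} (hVli : VlVal v b (univ \ {i}) Vli) (hi : Winning v b i) : VlN - Vli ≤ 0 := by
  obtain ⟨x, hx, hvix⟩ := hi
  have hwins : ∀ j, j ∉ univ \ {i} → 0 < v j x := by
    intro j hj
    rwa [show j = i by simpa using hj]
  linarith [hVlN.le_sum_of_optimal hx, hVli.sum_le_s2 hwins]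

end

theorem stmt2_general [Fintype X] [Nonempty X] [Fintype N] [DecidableEq N]
    (v b : N → X → ℝ)
    (hb : ∀ i x, 0 ≤ b i x ∧ b i x ≤ v i x)
    (π μ : N → ℝ)
    (VlN : ℝ) (Vli : N → ℝ)
    (hVlN : VlVal v b univ VlN)
    (hVli : ∀ i, VlVal v b (univ \ {i}) (Vli i))
    (hπ : ∀ i, 0 ≤ π i ∧ π i ≤ Vw b univ - Vw b (univ \ {i}))
    (hμ : ∀ i, 0 ≤ μ i ∧ μ i ≤ VlN - Vli i) :
    Valid v b π μ := by
  have hπ_le_bid : ∀ i x, Optimal b x → π i ≤ b i x := fun i x hx =>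
    (hπ i).2.trans (Vw_univ_sub_Vw_sdiff_singleton_le hx i)
  refine ⟨fun i => (hπ i).1, fun i => (hμ i).1, fun i hi => ⟨?_, fun x hx => hπ_le_bid i x hx⟩, ?_⟩
  · linarith [(hμ i).1, (hμ i).2, hVlN.sub_nonpos_of_winning (hVli i) hi]
  · rintro i ⟨x, hx, hvix⟩
    have hbix : b i x = 0 := le_antisymm ((hb i x).2.trans (not_lt.mp hvix)) (hb i x).1
    linarith [(hπ i).1, hπ_le_bid i x hx]

/-- if each discount is between 0 and the agent's VCG discount and each raise
is between 0 and the agent's VCG raise, then `π` and `μ` are valid discounts and raises. -/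
theorem stmt2 [Fintype X] [Nonempty X] [Fintype N] [Nonempty N] [DecidableEq N]
    (v b : N → X → ℝ)
    (hb : ∀ i x, 0 ≤ b i x ∧ b i x ≤ v i x)
    (hsupp : ∀ i, ∃ x, 0 < v i x)
    (π μ : N → ℝ)
    (VlN : ℝ) (Vli : N → ℝ)
    (hVlN : VlVal v b univ VlN)
    (hVli : ∀ i, VlVal v b (univ \ {i}) (Vli i))
    (hπ : ∀ i, 0 ≤ π i ∧ π i ≤ Vw b univ - Vw b (univ \ {i}))
    (hμ : ∀ i, 0 ≤ μ i ∧ μ i ≤ VlN - Vli i) :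
    Valid v b π μ :=
  stmt2_general v b hb π μ VlN Vli hVlN hVli hπ hμ
end

section
/- A vector μ ∈ ℝ^N belongs to the core 𝒞(N,V_ℓ) if and only if (0, μ) are valid discounts and raises and, for every coalition T ⊆ N and every choice of raised bids b̄_i with raise μ_i for i ∈ T, every optimal allocation under the original bids remains optimal after every agent i ∈ T raises its bid (i.e., 𝒳*(b) ⊆ 𝒳*(b'), where b'_i = b̄_i for i ∈ T and b'_i = b_i for i ∉ T). -/
/-!
Both sides of the equivalence say the same thing about the raises: for every coalition `S`, every
optimal allocation `x` and every allocation `y` in which all of `S` wins,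
`∑ i ∈ S, μ i ≤ ∑ b x - ∑ b y`. For the core this is just its definition unfolded, with `V_ℓ(N)`
attained at `x` and `V_ℓ(N ∖ S)` at `y`. A raise by the agents of `T` increases the welfare of `y`
by at most `∑ μ i` over the agents of `T` winning in `y`, and does not decrease the welfare of `x`,
so the inequality keeps `x` optimal. Conversely, raising every agent of `S` by exactly `μ i`
wherever it wins lifts the welfare of `y` by exactly `∑ i ∈ S, μ i`, while validity (`μ i = 0` for
agents winning in an optimal allocation) keeps the welfare of `x` from growing; optimality of `x`
after the raise is then the inequality.
-/

open Finset

variable {X N : Type*}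

def BoundedByWelfareLoss [Fintype N] (v b : N → X → ℝ) (μ : N → ℝ) : Prop :=
  ∀ (S : Finset N) (x y : X), Optimal b x →
    (∀ i ∈ S, 0 < v i y) → ∑ i ∈ S, μ i ≤ ∑ i, b i x - ∑ i, b i y

section CoreL

variable [Fintype X] [Fintype N] {v b : N → X → ℝ}

lemma exists_vlVal {S : Finset N} (h : ∃ x, ∀ i, i ∉ S → 0 < v i x) : ∃ r, VlVal v b S r := by
  obtain ⟨x, hx, hmax⟩ := Set.exists_max_image {x | ∀ i, i ∉ S → 0 < v i x}
    (fun x => ∑ i, b i x) (Set.toFinite _) h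
  exact ⟨_, ⟨x, hx, rfl⟩, fun _ ⟨y, hy, hr⟩ => hr ▸ hmax y hy⟩

variable [DecidableEq N]

lemma coreL_iff {μ : N → ℝ} :
    CoreL v b μ ↔ (∀ i, 0 ≤ μ i) ∧ BoundedByWelfareLoss v b μ := by
  constructor
  · rintro ⟨hμ, hcore⟩
    refine ⟨hμ, fun S x y hx hy => ?_⟩
    obtain ⟨rN, hN⟩ := exists_vlVal (v := v) (b := b) (S := univ) ⟨x, by simp⟩
    obtain ⟨rS, hS⟩ := exists_vlVal (v := v) (b := b) (S := univ \ S) ⟨y, by simpa using hy⟩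
    have hle := hcore S rN rS hN hS
    obtain ⟨x₀, -, rfl⟩ := hN.1
    have hyS : ∑ i, b i y ≤ rS := hS.2 ⟨y, by simpa using hy, rfl⟩
    linarith [hx x₀]
  · rintro ⟨hμ, hcore⟩
    refine ⟨hμ, fun S rN rS hN hS => ?_⟩
    obtain ⟨x, -, rfl⟩ := hN.1
    obtain ⟨y, hy, rfl⟩ := hS.1
    exact hcore S x y (fun z => hN.2 ⟨z, by simp, rfl⟩) (by simpa using hy)

end CoreL

section Raise

variable {v b c : X → ℝ} {μ : ℝ} {x : X}

lemma IsRaised.le_apply (hc : IsRaised v b μ c) (hb : 0 ≤ b x) (hμ : 0 ≤ μ) : b x ≤ c x := by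
  rcases hb.lt_or_eq with hb | hb
  · rw [hc.1 x hb]
    linarith
  · exact hb ▸ (hc.2.1 x hb.symm).1

lemma IsRaised.apply_le (hc : IsRaised v b μ c) (hb : 0 ≤ b x) :
    c x ≤ b x + if 0 < v x then μ else 0 := by
  split_ifs with hv
  · rcases hb.lt_or_eq with hb | hb
    · exact (hc.1 x hb).le
    · rw [← hb, zero_add]
      exact (hc.2.1 x hb.symm).2
  · rw [hc.2.2 x hv, add_zero]
    exact hb

noncomputable def fullRaise (v b : X → ℝ) (μ : ℝ) : X → ℝ := fun x => if 0 < v x then b x + μ else 0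

lemma isRaised_fullRaise (hbv : ∀ x, b x ≤ v x) (hμ : 0 ≤ μ) :
    IsRaised v b μ (fullRaise v b μ) := by
  refine ⟨fun x hbx => if_pos (hbx.trans_le (hbv x)), fun x hbx => ?_, fun x hv => if_neg hv⟩
  unfold fullRaise
  split_ifs
  · rw [hbx, zero_add]
    exact ⟨hμ, le_rfl⟩
  · exact ⟨le_rfl, hμ⟩

lemma fullRaise_le (hb : 0 ≤ b x) (hμ : 0 < v x → μ = 0) : fullRaise v b μ x ≤ b x := by
  unfold fullRaise
  split_ifs with hv
  · rw [hμ hv, add_zero]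
  · exact hb

end Raise

section Profile

variable [Fintype N] {v b c b' : N → X → ℝ} {μ : N → ℝ} {T : Finset N}

lemma valid_zero_of_core (hb : ∀ i x, 0 ≤ b i x) (hμ : ∀ i, 0 ≤ μ i)
    (hcore : BoundedByWelfareLoss v b μ) :
    Valid v b (fun _ => 0) μ := by
  refine ⟨fun _ => le_rfl, hμ, fun i ⟨x, hx, hv⟩ => ⟨?_, fun y _ => hb i y⟩, fun _ _ => rfl⟩
  have := hcore {i} x x hx (by simpa using hv)
  rw [sum_singleton, sub_self] at this
  exact this.antisymm (hμ i)

variable [DecidableEq N]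

lemma sum_le_sum_of_isRaised (hb : ∀ i x, 0 ≤ b i x) (hμ : ∀ i, 0 ≤ μ i)
    (hc : ∀ i ∈ T, IsRaised (v i) (b i) (μ i) (c i))
    (hT : ∀ i ∈ T, b' i = c i) (hnT : ∀ i ∉ T, b' i = b i) (x : X) :
    ∑ i, b i x ≤ ∑ i, b' i x := by
  refine sum_le_sum fun i _ => ?_
  by_cases hi : i ∈ T
  · rw [hT i hi]
    exact (hc i hi).le_apply (hb i x) (hμ i)
  · rw [hnT i hi]

lemma sum_isRaised_le (hb : ∀ i x, 0 ≤ b i x)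
    (hc : ∀ i ∈ T, IsRaised (v i) (b i) (μ i) (c i))
    (hT : ∀ i ∈ T, b' i = c i) (hnT : ∀ i ∉ T, b' i = b i) (y : X) :
    ∑ i, b' i y ≤ ∑ i, b i y + ∑ i ∈ T with 0 < v i y, μ i := by
  calc ∑ i, b' i y ≤ ∑ i, (b i y + if i ∈ T then (if 0 < v i y then μ i else 0) else 0) := by
        refine sum_le_sum fun i _ => ?_
        by_cases hi : i ∈ T
        · rw [hT i hi, if_pos hi]
          exact (hc i hi).apply_le (hb i y)
        · rw [hnT i hi, if_neg hi, add_zero]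
    _ = ∑ i, b i y + ∑ i ∈ T with 0 < v i y, μ i := by
        rw [sum_add_distrib, sum_ite_mem, univ_inter, sum_filter]

lemma sum_fullRaise_of_forall_pos {S : Finset N} {y : X} (hy : ∀ i ∈ S, 0 < v i y) :
    ∑ i, (if i ∈ S then fullRaise (v i) (b i) (μ i) else b i) y =
      ∑ i, b i y + ∑ i ∈ S, μ i := by
  calc _ = ∑ i, (b i y + if i ∈ S then μ i else 0) := by
        refine sum_congr rfl fun i _ => ?_
        by_cases hi : i ∈ S
        · simp only [hi, if_true, fullRaise, hy i hi]
        · simp only [hi, if_false, add_zero]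
    _ = ∑ i, b i y + ∑ i ∈ S, μ i := by rw [sum_add_distrib, sum_ite_mem, univ_inter]

lemma sum_fullRaise_le {S : Finset N} {x : X} (hb : ∀ i x, 0 ≤ b i x)
    (hμ : ∀ i, 0 < v i x → μ i = 0) :
    ∑ i, (if i ∈ S then fullRaise (v i) (b i) (μ i) else b i) x ≤ ∑ i, b i x := by
  refine sum_le_sum fun i _ => ?_
  split_ifs
  · exact fullRaise_le (hb i x) (hμ i)
  · exact le_rfl

lemma Optimal.of_isRaised
    (hcore : BoundedByWelfareLoss v b μ)
    (hb : ∀ i x, 0 ≤ b i x) (hμ : ∀ i, 0 ≤ μ i)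
    (hc : ∀ i ∈ T, IsRaised (v i) (b i) (μ i) (c i))
    (hT : ∀ i ∈ T, b' i = c i) (hnT : ∀ i ∉ T, b' i = b i) {x : X} (hx : Optimal b x) :
    Optimal b' x := fun y => by
  have hy := sum_isRaised_le hb hc hT hnT y
  have hcore_y := hcore {i ∈ T | 0 < v i y} x y hx fun i hi => (mem_filter.1 hi).2
  have hx' := sum_le_sum_of_isRaised hb hμ hc hT hnT x
  linarith

end Profile

theorem stmt5_general [Fintype X] [Fintype N] [DecidableEq N]
    (v b : N → X → ℝ)
    (hb : ∀ i x, 0 ≤ b i x ∧ b i x ≤ v i x)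
    (μ : N → ℝ) :
    CoreL v b μ ↔
      (Valid v b (fun _ => 0) μ ∧
        ∀ T : Finset N, ∀ c : N → X → ℝ,
          (∀ i ∈ T, IsRaised (v i) (b i) (μ i) (c i)) →
            ∀ b' : N → X → ℝ,
              (∀ i ∈ T, b' i = c i) → (∀ i ∉ T, b' i = b i) →
                ∀ x, Optimal b x → Optimal b' x) := by
  have hb₀ i x : 0 ≤ b i x := (hb i x).1
  rw [coreL_iff]
  constructor
  · rintro ⟨hμ, hcore⟩
    exact ⟨valid_zero_of_core hb₀ hμ hcore, fun T c hc b' hT hnT x hx =>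
      hx.of_isRaised hcore hb₀ hμ hc hT hnT⟩
  · rintro ⟨hvalid, hpres⟩
    have hμ := hvalid.2.1
    refine ⟨hμ, fun S x y hx hy => ?_⟩
    have hopt := hpres S _ (fun i _ => isRaised_fullRaise (fun x => (hb i x).2) (hμ i))
      (fun i => if i ∈ S then fullRaise (v i) (b i) (μ i) else b i)
      (fun i hi => if_pos hi) (fun i hi => if_neg hi) x hx y
    rw [sum_fullRaise_of_forall_pos hy] at hopt
    have hx' := sum_fullRaise_le (S := S) hb₀ fun i hv => (hvalid.2.2.1 i ⟨x, hx, hv⟩).1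
    linarith

/-- `μ ∈ 𝒞(N, V_ℓ)` iff `(0, μ)` are valid discounts and raises and, for every
coalition `T` and every choice of raised bids with raises `μ i` for `i ∈ T`, every optimal
allocation remains optimal after every agent `i ∈ T` raises its bid. -/
theorem stmt5 [Fintype X] [Nonempty X] [Fintype N] [Nonempty N] [DecidableEq N]
    (v b : N → X → ℝ)
    (hb : ∀ i x, 0 ≤ b i x ∧ b i x ≤ v i x)
    (hsupp : ∀ i, ∃ x, 0 < v i x)
    (hafd : AFD v)
    (μ : N → ℝ) :
    CoreL v b μ ↔
      (Valid v b (fun _ => 0) μ ∧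
        ∀ T : Finset N, ∀ c : N → X → ℝ,
          (∀ i ∈ T, IsRaised (v i) (b i) (μ i) (c i)) →
            ∀ b' : N → X → ℝ,
              (∀ i ∈ T, b' i = c i) → (∀ i ∉ T, b' i = b i) →
                ∀ x, Optimal b x → Optimal b' x) :=
  stmt5_general v b hb μ
end

section
/- Suppose (π, μ) belongs to the bicore 𝒞₂(N,V). Then π, μ are valid discounts and raises, and for every pair of coalitions S, T ⊆ N and every choice of raised bids b̄_i with raise μ_i for i ∈ T, every optimal allocation under the original bids remains optimal after every agent i ∈ S discounts its bid by π_i and every agent i ∈ T replaces its bid by b̄_i (i.e., 𝒳*(b) ⊆ 𝒳*(b'), where b'_i is the discounted bid for i ∈ S, b'_i = b̄_i for i ∈ T, and b'_i = b_i otherwise). -/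
open Finset

variable {X N : Type*}

/-!
Choosing `S = {i}, T = ∅` in the bicore inequality gives `π i ≤ b i x` at every optimal `x`,
and `S = ∅, T = {i}` gives `μ i = 0` for every agent winning in an optimal `x`; together this
is validity. It follows that at an optimal `x` the discounts of `S \ T` are paid in full and
the raises of `T` vanish, so the new total at `x` is `∑ b x - π(S \ T)`. At any other `y`, an
agent of `S \ T` whose discount is refunded contributes `max (b i y) (π i)`, and an agent of
`T` gains at most `μ i`, and only if it wins in `y`. The bicore inequality for
`S' = {i ∈ S \ T | b i y ≤ π i}` and `T' = {i ∈ T | 0 < v i y}` bounds exactly this total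
by `∑ b x`.
-/

theorem exists_vVal_ge [Fintype X] [DecidableEq N] (v b : N → X → ℝ) (S T : Finset N) {y : X}
    (hy : ∀ i ∈ T, 0 < v i y) : ∃ r, VVal v b S T r ∧ ∑ i ∈ S ∪ T, b i y ≤ r := by
  obtain ⟨z, hz, hmax⟩ := Set.exists_max_image {z | ∀ i ∈ T, 0 < v i z}
    (fun z => ∑ i ∈ S ∪ T, b i z) (Set.toFinite _) ⟨y, hy⟩
  refine ⟨_, ⟨⟨z, hz, rfl⟩, ?_⟩, hmax y hy⟩
  rintro _ ⟨w, hw, rfl⟩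
  exact hmax w hw

theorem disc_add_eq_max (b : X → ℝ) (π : ℝ) (x : X) : Disc b π x + π = max (b x) π := by
  rw [Disc, ← max_add_add_right, sub_add_cancel, zero_add]

theorem bid_eq_zero_of_not_pos {v b : N → X → ℝ} (hb : ∀ i x, 0 ≤ b i x ∧ b i x ≤ v i x)
    {i : N} {x : X} (hv : ¬ 0 < v i x) : b i x = 0 :=
  le_antisymm ((hb i x).2.trans (not_lt.1 hv)) (hb i x).1

namespace IsRaised

variable {v b c : X → ℝ} {μ : ℝ} {x : X}

theorem apply_le_add (h : IsRaised v b μ c) (hb : 0 ≤ b x) : c x ≤ b x + μ := by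
  rcases hb.lt_or_eq with hpos | hzero
  · exact (h.1 x hpos).le
  · rw [← hzero, zero_add]
    exact (h.2.1 x hzero.symm).2

theorem apply_eq_of_raise_eq_zero (h : IsRaised v b 0 c) (hb : 0 ≤ b x) : c x = b x := by
  rcases hb.lt_or_eq with hpos | hzero
  · rw [h.1 x hpos, add_zero]
  · rw [← hzero]
    exact le_antisymm (h.2.1 x hzero.symm).2 (h.2.1 x hzero.symm).1

end IsRaised

def AdjustedBids (S T : Finset N) (π : N → ℝ) (c b b' : N → X → ℝ) : Prop :=
  (∀ i ∈ S, b' i = Disc (b i) (π i)) ∧ (∀ i ∈ T, b' i = c i) ∧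
    (∀ i, i ∉ S → i ∉ T → b' i = b i)

namespace Bicore

variable [Fintype X] [Fintype N] [DecidableEq N] {v b : N → X → ℝ} {π μ : N → ℝ} {x : X}

theorem add_sum_le (h : Bicore v b π μ) (hx : Optimal b x) {S T : Finset N} {y : X}
    (hy : ∀ i ∈ T, 0 < v i y) :
    ∑ i ∈ S, π i + ∑ j ∈ T, μ j + ∑ i ∈ (univ \ S) ∪ T, b i y ≤ ∑ i, b i x := by
  obtain ⟨rN, hrN, -⟩ := exists_vVal_ge v b univ ∅ (y := x) (by simp)
  obtain ⟨r, hr, hyr⟩ := exists_vVal_ge v b (univ \ S) T hy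
  have hrN_le : rN ≤ ∑ i, b i x := by
    obtain ⟨z, -, rfl⟩ := hrN.1
    simpa using hx z
  linarith [h.2.2 S T rN r hrN hr]

theorem discount_le_of_optimal (h : Bicore v b π μ) (hx : Optimal b x) (i : N) :
    π i ≤ b i x := by
  have key := h.add_sum_le hx (S := {i}) (T := ∅) (y := x) (by simp)
  have hsplit := sum_sdiff (f := fun j => b j x) (subset_univ {i})
  simp only [sum_singleton, sum_empty, union_empty] at key hsplit
  linarith

theorem raise_eq_zero_of_winning (h : Bicore v b π μ) {i : N} (hi : Winning v b i) :
    μ i = 0 := by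
  obtain ⟨x, hx, hvi⟩ := hi
  have key := h.add_sum_le hx (S := ∅) (T := {i}) (y := x) (by simpa using hvi)
  simp only [sum_empty, sum_singleton, sdiff_empty, zero_add, union_eq_left.2 (subset_univ _)]
    at key
  exact le_antisymm (by linarith) (h.2.1 i)

theorem discount_eq_zero_of_losing (h : Bicore v b π μ) (hb : ∀ i x, 0 ≤ b i x ∧ b i x ≤ v i x)
    {i : N} (hi : Losing v b i) : π i = 0 := by
  obtain ⟨x, hx, hvi⟩ := hi
  have hπ := h.discount_le_of_optimal hx i
  rw [bid_eq_zero_of_not_pos hb hvi] at hπ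
  exact le_antisymm hπ (h.1 i)

theorem valid (h : Bicore v b π μ) (hb : ∀ i x, 0 ≤ b i x ∧ b i x ≤ v i x) :
    Valid v b π μ :=
  ⟨h.1, h.2.1,
    fun _ hi => ⟨h.raise_eq_zero_of_winning hi, fun _ hx => h.discount_le_of_optimal hx _⟩,
    fun _ hi => h.discount_eq_zero_of_losing hb hi⟩

theorem raised_apply_of_optimal (h : Bicore v b π μ) (hb : ∀ i x, 0 ≤ b i x ∧ b i x ≤ v i x)
    (hx : Optimal b x) {i : N} {c : X → ℝ} (hc : IsRaised (v i) (b i) (μ i) c) :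
    c x = b i x := by
  by_cases hv : 0 < v i x
  · rw [h.raise_eq_zero_of_winning ⟨x, hx, hv⟩] at hc
    exact hc.apply_eq_of_raise_eq_zero (hb i x).1
  · rw [hc.2.2 x hv, bid_eq_zero_of_not_pos hb hv]

variable {S T : Finset N} {c b' : N → X → ℝ}

theorem adjustedBids_apply_add_of_optimal (h : Bicore v b π μ)
    (hb : ∀ i x, 0 ≤ b i x ∧ b i x ≤ v i x) (hc : ∀ i ∈ T, IsRaised (v i) (b i) (μ i) (c i))
    (hb' : AdjustedBids S T π c b b') (hx : Optimal b x) (i : N) :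
    b' i x + (if i ∈ S \ T then π i else 0) = b i x := by
  obtain ⟨hS, hT, hO⟩ := hb'
  by_cases hiT : i ∈ T
  · simp [hiT, hT i hiT, h.raised_apply_of_optimal hb hx (hc i hiT)]
  by_cases hiS : i ∈ S
  · simp [hiT, hiS, hS i hiS, Disc, max_eq_left (sub_nonneg.2 (h.discount_le_of_optimal hx i))]
  · simp [hiS, hO i hiS hiT]

end Bicore

theorem AdjustedBids.apply_add_le {v b : N → X → ℝ} {π μ : N → ℝ} [DecidableEq N]
    {S T : Finset N} {c b' : N → X → ℝ} (hb : ∀ i x, 0 ≤ b i x ∧ b i x ≤ v i x)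
    (hc : ∀ i ∈ T, IsRaised (v i) (b i) (μ i) (c i)) (hb' : AdjustedBids S T π c b b')
    (y : X) (i : N) :
    b' i y + (if i ∈ S \ T then π i else 0) ≤
      (if i ∈ S \ T ∧ b i y ≤ π i then π i else b i y) +
        (if i ∈ T ∧ 0 < v i y then μ i else 0) := by
  obtain ⟨hS, hT, hO⟩ := hb'
  by_cases hiT : i ∈ T
  · by_cases hv : 0 < v i y
    · simpa [hiT, hv, hT i hiT] using (hc i hiT).apply_le_add (hb i y).1
    · simpa [hiT, hv, hT i hiT, (hc i hiT).2.2 y hv] using (hb i y).1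
  by_cases hiS : i ∈ S
  · simp only [hS i hiS, disc_add_eq_max, mem_sdiff, hiS, hiT, not_false_eq_true, and_self,
      true_and, if_true, false_and, if_false, add_zero]
    split_ifs with hle
    · exact (max_eq_right hle).le
    · exact (max_eq_left (le_of_not_ge hle)).le
  · simp [hiS, hiT, hO i hiS hiT]

theorem Bicore.optimal_of_adjustedBids [Fintype X] [Fintype N] [DecidableEq N]
    {v b : N → X → ℝ} {π μ : N → ℝ} {S T : Finset N} {c b' : N → X → ℝ}
    (h : Bicore v b π μ) (hb : ∀ i x, 0 ≤ b i x ∧ b i x ≤ v i x)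
    (hc : ∀ i ∈ T, IsRaised (v i) (b i) (μ i) (c i)) (hb' : AdjustedBids S T π c b b')
    {x : X} (hx : Optimal b x) : Optimal b' x := by
  intro y
  set S' := univ.filter fun i => i ∈ S \ T ∧ b i y ≤ π i
  set T' := univ.filter fun i => i ∈ T ∧ 0 < v i y
  have htotal_x : ∑ i, b' i x + ∑ i ∈ S \ T, π i = ∑ i, b i x := by
    rw [← univ_inter (S \ T), ← sum_ite_mem, ← sum_add_distrib]
    exact sum_congr rfl fun i _ => h.adjustedBids_apply_add_of_optimal hb hc hb' hx i
  have htotal_y : ∑ i, b' i y + ∑ i ∈ S \ T, π i ≤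
      ∑ i ∈ S', π i + ∑ i ∈ univ \ S', b i y + ∑ i ∈ T', μ i := by
    rw [← univ_inter (S \ T), ← sum_ite_mem, ← sum_add_distrib, ← filter_not, ← sum_ite,
      sum_filter, ← sum_add_distrib]
    exact sum_le_sum fun i _ => hb'.apply_add_le hb hc y i
  have hbicore := h.add_sum_le hx (S := S') (T := T') (y := y) fun i hi => (mem_filter.1 hi).2.2
  have hmono : ∑ i ∈ univ \ S', b i y ≤ ∑ i ∈ (univ \ S') ∪ T', b i y :=
    sum_le_sum_of_subset_of_nonneg subset_union_left fun i _ _ => (hb i y).1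
  linarith

theorem stmt7_general [Fintype X] [Fintype N] [DecidableEq N]
    (v b : N → X → ℝ)
    (hb : ∀ i x, 0 ≤ b i x ∧ b i x ≤ v i x)
    (π μ : N → ℝ)
    (hbicore : Bicore v b π μ) :
    Valid v b π μ ∧
      ∀ (S T : Finset N) (c : N → X → ℝ),
        (∀ i ∈ T, IsRaised (v i) (b i) (μ i) (c i)) →
          ∀ b' : N → X → ℝ,
            (∀ i ∈ S, b' i = Disc (b i) (π i)) → (∀ i ∈ T, b' i = c i) →
              (∀ i, i ∉ S → i ∉ T → b' i = b i) →
                ∀ x, Optimal b x → Optimal b' x :=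
  ⟨hbicore.valid hb, fun _ _ _ hc _ hS hT hO _ hx =>
    hbicore.optimal_of_adjustedBids hb hc ⟨hS, hT, hO⟩ hx⟩

/-- if `(π, μ) ∈ 𝒞₂(N, V)`, then `π, μ` are valid discounts and raises, and for
every pair of coalitions `S, T` and every choice of raised bids, every optimal allocation
remains optimal after every agent in `S` discounts and every agent in `T` raises. -/
theorem stmt7 [Fintype X] [Nonempty X] [Fintype N] [Nonempty N] [DecidableEq N]
    (v b : N → X → ℝ)
    (hb : ∀ i x, 0 ≤ b i x ∧ b i x ≤ v i x)
    (hsupp : ∀ i, ∃ x, 0 < v i x)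
    (hafd : AFD v)
    (π μ : N → ℝ)
    (hbicore : Bicore v b π μ) :
    Valid v b π μ ∧
      ∀ (S T : Finset N) (c : N → X → ℝ),
        (∀ i ∈ T, IsRaised (v i) (b i) (μ i) (c i)) →
          ∀ b' : N → X → ℝ,
            (∀ i ∈ S, b' i = Disc (b i) (π i)) → (∀ i ∈ T, b' i = c i) →
              (∀ i, i ∉ S → i ∉ T → b' i = b i) →
                ∀ x, Optimal b x → Optimal b' x :=
  stmt7_general v b hb π μ hbicore
end

section
/- For any μ ∈ ℝ^N, the pair (0, μ) belongs to the bicore 𝒞₂(N,V) if and only if μ belongs to the core 𝒞(N,V_ℓ). -/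
/-!
Since `V(N, T) = V_ℓ(N ∖ T)`, the bicore inequalities for `π = 0` and `S = ∅` are exactly the
core inequalities. The remaining ones follow from these: bids are nonnegative, so
`V(N ∖ S, T) ≤ V(N, T)`, and `V(N, T)` exists as soon as `V(N ∖ S, T)` does because `𝒳` is finite.
-/

open Finset

variable {X N : Type*}

section CoalitionalValues

variable [DecidableEq N] {v b : N → X → ℝ} {S S' T : Finset N} {r r' : ℝ}

theorem vVal_univ_iff_vlVal [Fintype N] :
    VVal v b univ T r ↔ VlVal v b (univ \ T) r := by
  simp [VVal, VlVal, union_eq_left.2 (subset_univ T)]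

theorem exists_vVal [Fintype X] (h : ∃ x, ∀ i ∈ T, 0 < v i x) : ∃ r, VVal v b S T r := by
  obtain ⟨x₀, hx₀⟩ := h
  set s := {r : ℝ | ∃ x : X, (∀ i ∈ T, 0 < v i x) ∧ r = ∑ i ∈ S ∪ T, b i x}
  have hs : s.Finite :=
    (Set.finite_range fun x => ∑ i ∈ S ∪ T, b i x).subset fun _ ⟨x, _, hr⟩ => ⟨x, hr.symm⟩
  have hne : s.Nonempty := ⟨_, x₀, hx₀, rfl⟩
  exact ⟨sSup s, hne.csSup_mem hs, fun _ hr => le_csSup hs.bddAbove hr⟩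

theorem VVal.le_of_subset (hb : ∀ i x, 0 ≤ b i x) (hS : S ⊆ S')
    (hr : VVal v b S T r) (hr' : VVal v b S' T r') : r ≤ r' := by
  obtain ⟨x, hxT, rfl⟩ := hr.1
  calc ∑ i ∈ S ∪ T, b i x ≤ ∑ i ∈ S' ∪ T, b i x :=
        sum_le_sum_of_subset_of_nonneg (union_subset_union_left hS) fun i _ _ => hb i x
    _ ≤ r' := hr'.2 ⟨x, hxT, rfl⟩

end CoalitionalValues

theorem stmt9_general [Fintype X] [Fintype N] [DecidableEq N]
    (v b : N → X → ℝ)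
    (hb : ∀ i x, 0 ≤ b i x ∧ b i x ≤ v i x)
    (μ : N → ℝ) :
    Bicore v b (fun _ => 0) μ ↔ CoreL v b μ := by
  have hN {r : ℝ} : VVal v b univ ∅ r ↔ VlVal v b univ r := by
    simpa using vVal_univ_iff_vlVal (T := (∅ : Finset N))
  constructor
  · rintro ⟨-, hμ, hbicore⟩
    refine ⟨hμ, fun S rN rS hrN hrS => ?_⟩
    simpa using hbicore ∅ S rN rS (hN.2 hrN) (by simpa using vVal_univ_iff_vlVal.2 hrS)
  · rintro ⟨hμ, hcore⟩
    refine ⟨fun _ => le_rfl, hμ, fun S T rN r hrN hr => ?_⟩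
    obtain ⟨rT, hrT⟩ := exists_vVal (S := univ) (b := b) (hr.1.imp fun _ => And.left)
    have hle : r ≤ rT := hr.le_of_subset (fun i x => (hb i x).1) (subset_univ _) hrT
    have hcoreT := hcore T rN rT (hN.1 hrN) (vVal_univ_iff_vlVal.1 hrT)
    simp only [sum_const_zero, zero_add]
    linarith

/-- `(0, μ) ∈ 𝒞₂(N, V)` if and only if `μ ∈ 𝒞(N, V_ℓ)`. -/
theorem stmt9 [Fintype X] [Nonempty X] [Fintype N] [Nonempty N] [DecidableEq N]
    (v b : N → X → ℝ)
    (hb : ∀ i x, 0 ≤ b i x ∧ b i x ≤ v i x)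
    (hsupp : ∀ i, ∃ x, 0 < v i x)
    (μ : N → ℝ) :
    Bicore v b (fun _ => 0) μ ↔ CoreL v b μ :=
  stmt9_general v b hb μ
end

section
/- In the assignment model: the set of optimal solutions to the dual linear program D(N,∅) is closed under the meet operation (π¹,μ¹,p¹) ∧ (π²,μ²,p²) = (max{π¹,π²}, min{μ¹,μ²}, min{p¹,p²}) and the join operation (π¹,μ¹,p¹) ∨ (π²,μ²,p²) = (min{π¹,π²}, max{μ¹,μ²}, max{p¹,p²}), where max and min are taken componentwise; hence it forms a lattice under these operations. -/
open Finset

variable {N M : Type*}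

/-- A matching: a set of agent–item pairs in which each agent and each item
appears at most once. -/
def IsMatching (x : Finset (N × M)) : Prop :=
  (∀ p ∈ x, ∀ q ∈ x, p.1 = q.1 → p = q) ∧
  (∀ p ∈ x, ∀ q ∈ x, p.2 = q.2 → p = q)

/-- `r` is the value `V(S,T)` in the assignment model: the maximum of the total bid over
matchings in which every matched agent lies in `S ∪ T` and every agent of `T` is matched. -/
def AVal [DecidableEq N] (b : N → M → ℝ) (S T : Finset N) (r : ℝ) : Prop :=
  IsGreatest {r : ℝ | ∃ x : Finset (N × M), IsMatching x ∧
    (∀ p ∈ x, p.1 ∈ S ∪ T) ∧ (∀ i ∈ T, ∃ j, (i, j) ∈ x) ∧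
    r = ∑ p ∈ x, b p.1 p.2} r

/-- Feasibility for the dual linear program. -/
def DualFeasible [Fintype N] [Fintype M] (b : N → M → ℝ)
    (π μ : N → ℝ) (p : M → ℝ) : Prop :=
  (∀ i, 0 ≤ π i) ∧ (∀ i, 0 ≤ μ i) ∧ (∀ j, 0 ≤ p j) ∧
  ∀ i j, b i j - p j ≤ π i - μ i

/-- The objective of the dual linear program `D(N, ∅)`. -/
def DualObj [Fintype N] [Fintype M] (π : N → ℝ) (p : M → ℝ) : ℝ :=
  ∑ j, p j + ∑ i, π i

/-- The objective of the parametrized dual linear program `D(S, T)`. -/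
def DualObjST [Fintype M] [DecidableEq N] (S T : Finset N) (π μ : N → ℝ) (p : M → ℝ) : ℝ :=
  ∑ j, p j + ∑ i ∈ S ∪ T, π i - ∑ i ∈ T, μ i

/-- `(π, μ, p)` is an optimal solution to the dual linear program `D(N, ∅)`. -/
def DualOptimal [Fintype N] [Fintype M] (b : N → M → ℝ)
    (π μ : N → ℝ) (p : M → ℝ) : Prop :=
  DualFeasible b π μ p ∧
  ∀ π' μ' p', DualFeasible b π' μ' p' → DualObj π p ≤ DualObj π' p'

/-- The bicore `𝒞₂(N, V)` in the assignment model. -/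
def AssignBicore [Fintype N] [DecidableEq N] [Fintype M] (b : N → M → ℝ)
    (π μ : N → ℝ) : Prop :=
  (∀ i, 0 ≤ π i) ∧ (∀ i, 0 ≤ μ i) ∧
  ∀ (S T : Finset N) (rN r : ℝ), AVal b univ ∅ rN → AVal b (univ \ S) T r →
    ∑ i ∈ S, π i + ∑ j ∈ T, μ j ≤ rN - r

/-!
The meet is always feasible: each constraint `b i j - p j ≤ π i - μ i` holds for the index
`k ∈ {1, 2}` realising `min (p₁ j) (p₂ j)`. For the join this fails in general, but at an optimal
solution `π i` and `μ i` are never both positive (otherwise lowering both by their minimum keeps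
feasibility and lowers the objective), and with that complementarity the join is feasible too.
Since `min + max` is the sum, the objectives of meet and join add up to twice the optimal value,
and as neither is below the optimum, both are optimal.
-/

section Lattice

variable [Fintype N] [Fintype M] {b : N → M → ℝ}

theorem DualFeasible.meet {π₁ μ₁ π₂ μ₂ : N → ℝ} {p₁ p₂ : M → ℝ}
    (h₁ : DualFeasible b π₁ μ₁ p₁) (h₂ : DualFeasible b π₂ μ₂ p₂) :
    DualFeasible b (fun i => max (π₁ i) (π₂ i)) (fun i => min (μ₁ i) (μ₂ i))
      (fun j => min (p₁ j) (p₂ j)) := by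
  obtain ⟨hπ₁, hμ₁, hp₁, hc₁⟩ := h₁
  obtain ⟨hπ₂, hμ₂, hp₂, hc₂⟩ := h₂
  refine ⟨fun i => (hπ₁ i).trans (le_max_left _ _), fun i => le_min (hμ₁ i) (hμ₂ i),
    fun j => le_min (hp₁ j) (hp₂ j), fun i j => ?_⟩
  rcases le_total (p₁ j) (p₂ j) with hp | hp
  · have := hc₁ i j
    simp only [min_eq_left hp]
    linarith [min_le_left (μ₁ i) (μ₂ i), le_max_left (π₁ i) (π₂ i)]
  · have := hc₂ i j
    simp only [min_eq_right hp]
    linarith [min_le_right (μ₁ i) (μ₂ i), le_max_right (π₁ i) (π₂ i)]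

theorem DualOptimal.mu_eq_zero_or_pi_eq_zero {π μ : N → ℝ} {p : M → ℝ}
    (h : DualOptimal b π μ p) (i : N) : μ i = 0 ∨ π i = 0 := by
  classical
  obtain ⟨⟨hπ, hμ, hp, hc⟩, hopt⟩ := h
  by_contra! hpos
  set ε := min (π i) (μ i)
  have hε : 0 < ε := lt_min ((hπ i).lt_of_ne' hpos.2) ((hμ i).lt_of_ne' hpos.1)
  have hfeas : DualFeasible b (π - Pi.single i ε) (μ - Pi.single i ε) p := by
    refine ⟨fun k => ?_, fun k => ?_, hp, fun k j => ?_⟩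
    · rcases eq_or_ne k i with rfl | hk
      · simp only [Pi.sub_apply, Pi.single_eq_same, sub_nonneg]
        exact min_le_left _ _
      · simpa [hk] using hπ k
    · rcases eq_or_ne k i with rfl | hk
      · simp only [Pi.sub_apply, Pi.single_eq_same, sub_nonneg]
        exact min_le_right _ _
      · simpa [hk] using hμ k
    · simpa using hc k j
  have := hopt _ _ _ hfeas
  simp only [DualObj, Pi.sub_apply, sum_sub_distrib, sum_pi_single', mem_univ, if_true] at this
  linarith

theorem max_sub_le_min_sub_max_of_complementary {β p₁ p₂ π₁ π₂ μ₁ μ₂ : ℝ}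
    (hπ₁ : 0 ≤ π₁) (hπ₂ : 0 ≤ π₂) (hμ₁ : 0 ≤ μ₁) (hμ₂ : 0 ≤ μ₂)
    (h₁ : β - p₁ ≤ π₁ - μ₁) (h₂ : β - p₂ ≤ π₂ - μ₂)
    (hc₁ : μ₁ = 0 ∨ π₁ = 0) (hc₂ : μ₂ = 0 ∨ π₂ = 0) :
    β - max p₁ p₂ ≤ min π₁ π₂ - max μ₁ μ₂ := by
  wlog hμ : μ₂ ≤ μ₁ generalizing p₁ p₂ π₁ π₂ μ₁ μ₂
  · simpa only [max_comm, min_comm] using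
      this hπ₂ hπ₁ hμ₂ hμ₁ h₂ h₁ hc₂ hc₁ (le_of_not_ge hμ)
  rw [max_eq_left hμ]
  rcases hc₁ with hμ₁0 | hπ₁0
  · rw [hμ₁0, sub_zero]
    exact le_min (by linarith [le_max_left p₁ p₂]) (by linarith [le_max_right p₁ p₂])
  · rw [min_eq_left (hπ₁0 ▸ hπ₂)]
    linarith [le_max_left p₁ p₂]

theorem DualFeasible.join {π₁ μ₁ π₂ μ₂ : N → ℝ} {p₁ p₂ : M → ℝ}
    (h₁ : DualFeasible b π₁ μ₁ p₁) (h₂ : DualFeasible b π₂ μ₂ p₂)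
    (hc₁ : ∀ i, μ₁ i = 0 ∨ π₁ i = 0) (hc₂ : ∀ i, μ₂ i = 0 ∨ π₂ i = 0) :
    DualFeasible b (fun i => min (π₁ i) (π₂ i)) (fun i => max (μ₁ i) (μ₂ i))
      (fun j => max (p₁ j) (p₂ j)) := by
  obtain ⟨hπ₁, hμ₁, hp₁, hb₁⟩ := h₁
  obtain ⟨hπ₂, hμ₂, hp₂, hb₂⟩ := h₂
  exact ⟨fun i => le_min (hπ₁ i) (hπ₂ i), fun i => (hμ₁ i).trans (le_max_left _ _),
    fun j => (hp₁ j).trans (le_max_left _ _), fun i j =>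
      max_sub_le_min_sub_max_of_complementary (hπ₁ i) (hπ₂ i) (hμ₁ i) (hμ₂ i)
        (hb₁ i j) (hb₂ i j) (hc₁ i) (hc₂ i)⟩

theorem dualObj_meet_add_dualObj_join (π₁ π₂ : N → ℝ) (p₁ p₂ : M → ℝ) :
    DualObj (fun i => max (π₁ i) (π₂ i)) (fun j => min (p₁ j) (p₂ j)) +
      DualObj (fun i => min (π₁ i) (π₂ i)) (fun j => max (p₁ j) (p₂ j)) =
      DualObj π₁ p₁ + DualObj π₂ p₂ := by
  have hp : ∑ j, (min (p₁ j) (p₂ j) + max (p₁ j) (p₂ j)) = ∑ j, (p₁ j + p₂ j) :=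
    sum_congr rfl fun j _ => min_add_max _ _
  have hπ : ∑ i, (max (π₁ i) (π₂ i) + min (π₁ i) (π₂ i)) = ∑ i, (π₁ i + π₂ i) :=
    sum_congr rfl fun i _ => max_add_min _ _
  simp only [sum_add_distrib] at hp hπ
  simp only [DualObj]
  linarith

theorem DualOptimal.of_dualObj_le {π μ π' μ' : N → ℝ} {p p' : M → ℝ}
    (h : DualOptimal b π μ p) (h' : DualFeasible b π' μ' p')
    (hle : DualObj π' p' ≤ DualObj π p) : DualOptimal b π' μ' p' :=
  ⟨h', fun _ _ _ hf => hle.trans (h.2 _ _ _ hf)⟩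

end Lattice

theorem stmt16_general [Fintype N] [Fintype M]
    (b : N → M → ℝ)
    (π₁ μ₁ : N → ℝ) (p₁ : M → ℝ) (π₂ μ₂ : N → ℝ) (p₂ : M → ℝ)
    (h₁ : DualOptimal b π₁ μ₁ p₁) (h₂ : DualOptimal b π₂ μ₂ p₂) :
    DualOptimal b (fun i => max (π₁ i) (π₂ i)) (fun i => min (μ₁ i) (μ₂ i))
        (fun j => min (p₁ j) (p₂ j)) ∧
      DualOptimal b (fun i => min (π₁ i) (π₂ i)) (fun i => max (μ₁ i) (μ₂ i))
        (fun j => max (p₁ j) (p₂ j)) := by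
  have hmeet := h₁.1.meet h₂.1
  have hjoin := h₁.1.join h₂.1 h₁.mu_eq_zero_or_pi_eq_zero h₂.mu_eq_zero_or_pi_eq_zero
  have hsum := dualObj_meet_add_dualObj_join π₁ π₂ p₁ p₂
  have hval : DualObj π₂ p₂ = DualObj π₁ p₁ := le_antisymm (h₂.2 _ _ _ h₁.1) (h₁.2 _ _ _ h₂.1)
  have hmeet_ge := h₁.2 _ _ _ hmeet
  have hjoin_ge := h₁.2 _ _ _ hjoin
  exact ⟨h₁.of_dualObj_le hmeet (by linarith), h₁.of_dualObj_le hjoin (by linarith)⟩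

/-- the set of optimal solutions to the dual linear program `D(N, ∅)` is closed
under the meet operation `(max π, min μ, min p)` and the join operation `(min π, max μ, max p)`,
hence forms a lattice under these operations. -/
theorem stmt16 [Fintype N] [DecidableEq N] [Fintype M] [Nonempty M]
    (hmn : Fintype.card M ≤ Fintype.card N)
    (b : N → M → ℝ) (hb : ∀ i j, 0 ≤ b i j)
    (π₁ μ₁ : N → ℝ) (p₁ : M → ℝ) (π₂ μ₂ : N → ℝ) (p₂ : M → ℝ)
    (h₁ : DualOptimal b π₁ μ₁ p₁) (h₂ : DualOptimal b π₂ μ₂ p₂) :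
    DualOptimal b (fun i => max (π₁ i) (π₂ i)) (fun i => min (μ₁ i) (μ₂ i))
        (fun j => min (p₁ j) (p₂ j)) ∧
      DualOptimal b (fun i => min (π₁ i) (π₂ i)) (fun i => max (μ₁ i) (μ₂ i))
        (fun j => max (p₁ j) (p₂ j)) :=
  stmt16_general b π₁ μ₁ p₁ π₂ μ₂ p₂ h₁ h₂
end

section
/- In the assignment model: there exists an optimal solution (π*, μ*, p*) to the dual linear program D(N,∅) that is the smallest element of the lattice of optimal dual solutions, i.e., every optimal dual solution (π, μ, p) satisfies π ≤ π*, μ* ≤ μ, and p* ≤ p componentwise; moreover, at this solution π*_i equals agent i's VCG discount V_w(N) − V_w(N∖{i}) for every i ∈ N. -/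
open Finset

variable {N M : Type*}

/-! Write `V(S, J)` (`matchVal`) for the largest total bid of a matching of agents in `S` to
items in `J`, and call `(π, p) ≥ 0` with `b i j ≤ π i + p j` on `S × J` a cover of `(S, J)`. The
covers are the dual solutions with `μ = 0`, and nothing is lost by them: `μ ≥ 0` only tightens the
constraints and does not enter the objective.

By weak duality on the market without `i`, an optimal cover never gives agent `i` more than its
VCG discount `V(S, J) - V(S \ {i}, J)`. Conversely, take an optimal cover of `(S \ {i}, J)` in
which every item `j` receives at least its own VCG discount `V(S \ {i}, J) - V(S \ {i}, J \ {j})`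
and set `π i := V(S, J) - V(S \ {i}, J)`: this is an optimal cover of `(S, J)`, since adding
`(i, j)` to a matching gives `b i j + V(S \ {i}, J \ {j}) ≤ V(S, J)`. Optimal covers are closed
under `(π ⊔ π', p ⊓ p')`, so these combine into one optimal cover paying every agent its VCG
discount. Induction on `|S| + |J|`, with the item side read off the transposed bids, gives such
covers for every market. Fixing `π` at the VCG discounts, the least prices completing it to a
cover give the least optimal dual solution. -/

theorem isMatching_empty : IsMatching (∅ : Finset (N × M)) := by
  simp [IsMatching]

theorem IsMatching.insert [DecidableEq N] [DecidableEq M] {x : Finset (N × M)} {i : N} {j : M}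
    (hx : IsMatching x) (hi : ∀ q ∈ x, q.1 ≠ i) (hj : ∀ q ∈ x, q.2 ≠ j) :
    IsMatching (insert (i, j) x) := by
  refine ⟨?_, ?_⟩ <;> simp only [mem_insert, forall_eq_or_imp]
  · exact ⟨⟨fun _ => trivial, fun q hq h => absurd h.symm (hi q hq)⟩,
      fun q hq => ⟨fun h => absurd h (hi q hq), hx.1 q hq⟩⟩
  · exact ⟨⟨fun _ => trivial, fun q hq h => absurd h.symm (hj q hq)⟩,
      fun q hq => ⟨fun h => absurd h (hj q hq), hx.2 q hq⟩⟩

theorem IsMatching.map_swap {x : Finset (N × M)} (hx : IsMatching x) :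
    IsMatching (x.map (Equiv.prodComm N M).toEmbedding) := by
  simp only [IsMatching, mem_map_equiv, Equiv.prodComm_symm, Equiv.prodComm_apply,
    Prod.forall, Prod.swap_prod_mk, Prod.mk.injEq]
  exact ⟨fun j i h j' i' h' hj => by simpa [hj] using hx.2 _ h _ h' hj,
    fun j i h j' i' h' hi => by simpa [hi] using hx.1 _ h _ h' hi⟩

namespace Assignment

open Classical in
noncomputable def matchings (S : Finset N) (J : Finset M) : Finset (Finset (N × M)) :=
  (S ×ˢ J).powerset.filter IsMatching

theorem mem_matchings {S : Finset N} {J : Finset M} {x : Finset (N × M)} :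
    x ∈ matchings S J ↔ x ⊆ S ×ˢ J ∧ IsMatching x := by
  simp [matchings]

variable {b : N → M → ℝ}

variable (b) in
noncomputable def matchVal (S : Finset N) (J : Finset M) : ℝ :=
  (matchings S J).sup' ⟨∅, mem_matchings.2 ⟨empty_subset _, isMatching_empty⟩⟩
    fun x => ∑ q ∈ x, b q.1 q.2

theorem le_matchVal {S : Finset N} {J : Finset M} {x : Finset (N × M)} (hx : x ∈ matchings S J) :
    ∑ q ∈ x, b q.1 q.2 ≤ matchVal b S J :=
  le_sup' (fun x : Finset (N × M) => ∑ q ∈ x, b q.1 q.2) hx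

theorem exists_matchVal_eq (S : Finset N) (J : Finset M) :
    ∃ x ∈ matchings S J, matchVal b S J = ∑ q ∈ x, b q.1 q.2 :=
  exists_mem_eq_sup' _ _

theorem matchVal_mono_left {S S' : Finset N} {J : Finset M} (h : S ⊆ S') :
    matchVal b S J ≤ matchVal b S' J := by
  obtain ⟨x, hx, hval⟩ := exists_matchVal_eq (b := b) S J
  rw [mem_matchings] at hx
  exact hval ▸ le_matchVal (mem_matchings.2 ⟨hx.1.trans (product_subset_product_left h), hx.2⟩)

theorem matchVal_empty_left (J : Finset M) : matchVal b ∅ J = 0 := by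
  obtain ⟨x, hx, hval⟩ := exists_matchVal_eq (b := b) ∅ J
  rw [mem_matchings, empty_product, subset_empty] at hx
  rw [hval, hx.1, sum_empty]

theorem matchVal_erase_add_le [DecidableEq N] [DecidableEq M] {S : Finset N} {J : Finset M}
    {i : N} {j : M} (hi : i ∈ S) (hj : j ∈ J) :
    matchVal b (S.erase i) (J.erase j) + b i j ≤ matchVal b S J := by
  obtain ⟨x, hx, hval⟩ := exists_matchVal_eq (b := b) (S.erase i) (J.erase j)
  rw [mem_matchings] at hx
  have hmem : ∀ q ∈ x, (q.1 ≠ i ∧ q.1 ∈ S) ∧ q.2 ≠ j ∧ q.2 ∈ J := fun q hq => by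
    simpa only [mem_product, mem_erase] using hx.1 hq
  have hij : (i, j) ∉ x := fun h => (hmem _ h).1.1 rfl
  have hins : insert (i, j) x ∈ matchings S J := by
    refine mem_matchings.2 ⟨insert_subset (mem_product.2 ⟨hi, hj⟩) fun q hq => ?_,
      hx.2.insert (fun q hq => (hmem q hq).1.1) fun q hq => (hmem q hq).2.1⟩
    exact mem_product.2 ⟨(hmem q hq).1.2, (hmem q hq).2.2⟩
  have := le_matchVal (b := b) hins
  rw [sum_insert hij] at this
  linarith

theorem matchVal_flip_le (S : Finset N) (J : Finset M) :
    matchVal (flip b) J S ≤ matchVal b S J := by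
  obtain ⟨x, hx, hval⟩ := exists_matchVal_eq (b := flip b) J S
  rw [mem_matchings] at hx
  have hmap : x.map (Equiv.prodComm M N).toEmbedding ∈ matchings S J := by
    refine mem_matchings.2 ⟨fun q hq => ?_, hx.2.map_swap⟩
    obtain ⟨q', hq', rfl⟩ := mem_map.1 hq
    simpa [and_comm] using hx.1 hq'
  simpa [hval, flip] using le_matchVal (b := b) hmap

theorem matchVal_flip (S : Finset N) (J : Finset M) : matchVal (flip b) J S = matchVal b S J :=
  le_antisymm (matchVal_flip_le S J) (matchVal_flip_le (b := flip b) J S)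

theorem aVal_matchVal [DecidableEq N] [Fintype M] (S : Finset N) :
    AVal b S ∅ (matchVal b S univ) := by
  refine ⟨?_, ?_⟩
  · obtain ⟨x, hx, hval⟩ := exists_matchVal_eq (b := b) S univ
    rw [mem_matchings] at hx
    exact ⟨x, hx.2, fun q hq => by simpa using (mem_product.1 (hx.1 hq)).1, by simp, hval⟩
  · rintro r ⟨x, hx, hS, -, rfl⟩
    exact le_matchVal (mem_matchings.2 ⟨fun q hq => by simpa using hS q hq, hx⟩)

theorem AVal.eq_matchVal [DecidableEq N] [Fintype M] {S : Finset N} {r : ℝ}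
    (h : AVal b S ∅ r) : r = matchVal b S univ :=
  h.unique (aVal_matchVal S)

structure IsCover (b : N → M → ℝ) (S : Finset N) (J : Finset M) (π : N → ℝ) (p : M → ℝ) :
    Prop where
  nonneg_left : ∀ i, 0 ≤ π i
  nonneg_right : ∀ j, 0 ≤ p j
  le_add : ∀ i ∈ S, ∀ j ∈ J, b i j ≤ π i + p j

def coverCost (S : Finset N) (J : Finset M) (π : N → ℝ) (p : M → ℝ) : ℝ :=
  ∑ i ∈ S, π i + ∑ j ∈ J, p j

structure IsOptimalCover (b : N → M → ℝ) (S : Finset N) (J : Finset M) (π : N → ℝ)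
    (p : M → ℝ) : Prop extends IsCover b S J π p where
  cost_eq : coverCost S J π p = matchVal b S J

variable {S : Finset N} {J : Finset M} {π π' : N → ℝ} {p p' : M → ℝ}

theorem IsCover.flip (h : IsCover b S J π p) : IsCover (flip b) J S p π :=
  ⟨h.nonneg_right, h.nonneg_left, fun j hj i hi => (h.le_add i hi j hj).trans_eq (add_comm _ _)⟩

theorem IsOptimalCover.flip (h : IsOptimalCover b S J π p) : IsOptimalCover (flip b) J S p π :=
  ⟨h.toIsCover.flip, by rw [coverCost, add_comm, matchVal_flip]; exact h.cost_eq⟩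

theorem IsCover.mono_left (h : IsCover b S J π p) (hπ : π ≤ π') : IsCover b S J π' p :=
  ⟨fun i => (h.nonneg_left i).trans (hπ i), h.nonneg_right,
    fun i hi j hj => (h.le_add i hi j hj).trans (add_le_add (hπ i) le_rfl)⟩

theorem IsCover.matchVal_le (h : IsCover b S J π p) : matchVal b S J ≤ coverCost S J π p := by
  classical
  obtain ⟨x, hx, hval⟩ := exists_matchVal_eq (b := b) S J
  obtain ⟨hxS, hm⟩ := mem_matchings.1 hx
  have hagents : ∑ q ∈ x, π q.1 ≤ ∑ i ∈ S, π i := by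
    rw [← sum_image fun q hq q' hq' => hm.1 q hq q' hq']
    exact sum_le_sum_of_subset_of_nonneg
      (image_subset_iff.2 fun q hq => (mem_product.1 (hxS hq)).1) fun i _ _ => h.nonneg_left i
  have hitems : ∑ q ∈ x, p q.2 ≤ ∑ j ∈ J, p j := by
    rw [← sum_image fun q hq q' hq' => hm.2 q hq q' hq']
    exact sum_le_sum_of_subset_of_nonneg
      (image_subset_iff.2 fun q hq => (mem_product.1 (hxS hq)).2) fun j _ _ => h.nonneg_right j
  calc matchVal b S J = ∑ q ∈ x, b q.1 q.2 := hval
    _ ≤ ∑ q ∈ x, (π q.1 + p q.2) := sum_le_sum fun q hq =>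
        h.le_add _ (mem_product.1 (hxS hq)).1 _ (mem_product.1 (hxS hq)).2
    _ = ∑ q ∈ x, π q.1 + ∑ q ∈ x, p q.2 := sum_add_distrib
    _ ≤ coverCost S J π p := add_le_add hagents hitems

theorem IsCover.isOptimalCover (h : IsCover b S J π p) (hle : coverCost S J π p ≤ matchVal b S J) :
    IsOptimalCover b S J π p :=
  ⟨h, le_antisymm hle h.matchVal_le⟩

theorem IsCover.sup_inf (h : IsCover b S J π p) (h' : IsCover b S J π' p') :
    IsCover b S J (π ⊔ π') (p ⊓ p') := by
  refine ⟨fun i => (h.nonneg_left i).trans le_sup_left,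
    fun j => le_inf (h.nonneg_right j) (h'.nonneg_right j), fun i hi j hj => ?_⟩
  rcases le_total (p j) (p' j) with hp | hp
  · simpa [inf_of_le_left hp] using (h.le_add i hi j hj).trans (add_le_add le_sup_left le_rfl)
  · simpa [inf_of_le_right hp] using (h'.le_add i hi j hj).trans (add_le_add le_sup_right le_rfl)

theorem IsCover.inf_sup (h : IsCover b S J π p) (h' : IsCover b S J π' p') :
    IsCover b S J (π ⊓ π') (p ⊔ p') :=
  (h.flip.sup_inf h'.flip).flip

/-- The costs of the join and the meet add up to those of the two covers, and neither is below
the optimum. -/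
theorem IsOptimalCover.sup_inf (h : IsOptimalCover b S J π p) (h' : IsOptimalCover b S J π' p') :
    IsOptimalCover b S J (π ⊔ π') (p ⊓ p') := by
  have hsum : coverCost S J (π ⊔ π') (p ⊓ p') + coverCost S J (π ⊓ π') (p ⊔ p') =
      coverCost S J π p + coverCost S J π' p' := by
    simp only [coverCost, Pi.sup_apply, Pi.inf_apply]
    have hπ := sum_congr rfl fun i (_ : i ∈ S) => max_add_min (π i) (π' i)
    have hp := sum_congr rfl fun j (_ : j ∈ J) => min_add_max (p j) (p' j)
    rw [sum_add_distrib, sum_add_distrib] at hπ hp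
    linarith
  have hmeet := (h.toIsCover.inf_sup h'.toIsCover).matchVal_le
  exact (h.toIsCover.sup_inf h'.toIsCover).isOptimalCover (by linarith [h.cost_eq, h'.cost_eq])

theorem IsCover.subset_left {S' : Finset N} (h : IsCover b S J π p) (hS : S' ⊆ S) :
    IsCover b S' J π p :=
  ⟨h.nonneg_left, h.nonneg_right, fun i hi => h.le_add i (hS hi)⟩

theorem isOptimalCover_empty_left : IsOptimalCover b ∅ J 0 0 :=
  IsCover.isOptimalCover ⟨fun _ => le_rfl, fun _ => le_rfl, by simp⟩
    (by simp [coverCost, matchVal_empty_left])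

theorem exists_isOptimalCover_forall_le {c : N → ℝ} (I : Finset N)
    (hne : ∃ π p, IsOptimalCover b S J π p)
    (h : ∀ i ∈ I, ∃ π p, IsOptimalCover b S J π p ∧ c i ≤ π i) :
    ∃ π p, IsOptimalCover b S J π p ∧ ∀ i ∈ I, c i ≤ π i := by
  classical
  induction I using Finset.induction_on with
  | empty => simpa using hne
  | insert a I _ ih =>
    obtain ⟨π₁, p₁, hopt₁, ha⟩ := h a (mem_insert_self a I)
    obtain ⟨π₂, p₂, hopt₂, hI⟩ := ih fun i hi => h i (mem_insert_of_mem hi)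
    refine ⟨π₁ ⊔ π₂, p₁ ⊓ p₂, hopt₁.sup_inf hopt₂, forall_mem_insert _ _ _ |>.2
      ⟨ha.trans le_sup_left, fun i hi => (hI i hi).trans le_sup_right⟩⟩

section VCG

variable [DecidableEq N]

variable (b S J) in
noncomputable def vcgDiscount (i : N) : ℝ :=
  matchVal b S J - matchVal b (S.erase i) J

theorem vcgDiscount_nonneg (i : N) : 0 ≤ vcgDiscount b S J i :=
  sub_nonneg.2 (matchVal_mono_left (erase_subset i S))

theorem IsOptimalCover.le_vcgDiscount {i : N} (h : IsOptimalCover b S J π p) (hi : i ∈ S) :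
    π i ≤ vcgDiscount b S J i := by
  have hweak := (h.toIsCover.subset_left (erase_subset i S)).matchVal_le
  have hcost := h.cost_eq
  simp only [coverCost, ← add_sum_erase S π hi] at hweak hcost
  rw [vcgDiscount]
  linarith

variable (b S J) in
def HasVCGCover : Prop :=
  ∃ π p, IsOptimalCover b S J π p ∧ ∀ i ∈ S, vcgDiscount b S J i ≤ π i

theorem exists_isOptimalCover_vcgDiscount_le [DecidableEq M] {i : N} (hi : i ∈ S)
    (h : HasVCGCover (flip b) J (S.erase i)) :
    ∃ π p, IsOptimalCover b S J π p ∧ vcgDiscount b S J i ≤ π i := by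
  obtain ⟨p, π, hopt_flip, hvcg⟩ := h
  have hopt : IsOptimalCover b (S.erase i) J π p := hopt_flip.flip
  refine ⟨Function.update π i (vcgDiscount b S J i), p, IsCover.isOptimalCover
    ⟨fun k => ?_, hopt.nonneg_right, fun k hk j hj => ?_⟩ ?_, by simp⟩
  · rcases eq_or_ne k i with rfl | hne
    · simpa using vcgDiscount_nonneg k
    · simpa [hne] using hopt.nonneg_left k
  · rcases eq_or_ne k i with rfl | hne
    · have hj' := hvcg j hj
      have hpair := matchVal_erase_add_le (b := b) hk hj
      simp only [vcgDiscount, matchVal_flip] at hj'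
      simp only [Function.update_self, vcgDiscount]
      linarith
    · simpa [hne] using hopt.le_add k (mem_erase.2 ⟨hne, hk⟩) j hj
  · have hcost := hopt.cost_eq
    simp only [coverCost, sum_update_of_mem hi, sdiff_singleton_eq_erase, vcgDiscount] at hcost ⊢
    linarith

theorem hasVCGCover_of_forall_erase [DecidableEq M]
    (h : ∀ i ∈ S, HasVCGCover (flip b) J (S.erase i)) : HasVCGCover b S J := by
  rcases S.eq_empty_or_nonempty with rfl | ⟨i₀, hi₀⟩
  · exact ⟨0, 0, isOptimalCover_empty_left, by simp⟩
  · obtain ⟨π, p, hopt, -⟩ := exists_isOptimalCover_vcgDiscount_le hi₀ (h i₀ hi₀)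
    exact exists_isOptimalCover_forall_le S ⟨π, p, hopt⟩
      fun i hi => exists_isOptimalCover_vcgDiscount_le hi (h i hi)

variable (b S J) in
theorem hasVCGCover_and_flip [DecidableEq M] :
    HasVCGCover b S J ∧ HasVCGCover (flip b) J S := by
  induction hn : S.card + J.card using Nat.strong_induction_on generalizing S J with
  | _ n ih =>
    refine ⟨hasVCGCover_of_forall_erase fun i hi => (ih _ ?_ (S.erase i) J rfl).2,
      hasVCGCover_of_forall_erase fun j hj => (ih _ ?_ S (J.erase j) rfl).1⟩
    · have := card_pos.2 ⟨i, hi⟩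
      rw [card_erase_of_mem hi]
      omega
    · have := card_pos.2 ⟨j, hj⟩
      rw [card_erase_of_mem hj]
      omega

end VCG

variable (b S π) in
/-- The least price of item `j` that, together with `π`, covers all bids of the agents in `S`. -/
noncomputable def tightPrice (j : M) : ℝ :=
  ((S.sup fun i => (b i j - π i).toNNReal : NNReal) : ℝ)

theorem isCover_tightPrice (hπ : ∀ i, 0 ≤ π i) : IsCover b S J π (tightPrice b S π) := by
  refine ⟨hπ, fun j => NNReal.coe_nonneg _, fun i hi j _ => ?_⟩
  have hsup : ((b i j - π i).toNNReal : ℝ) ≤ tightPrice b S π j :=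
    NNReal.coe_le_coe.2 (le_sup (f := fun i => (b i j - π i).toNNReal) hi)
  linarith [Real.le_coe_toNNReal (b i j - π i)]

theorem IsCover.tightPrice_le {j : M} (h : IsCover b S J π p) (hj : j ∈ J) :
    tightPrice b S π j ≤ p j := by
  rw [tightPrice, ← Real.coe_toNNReal _ (h.nonneg_right j), NNReal.coe_le_coe]
  exact Finset.sup_le fun i hi => Real.toNNReal_le_toNNReal (by linarith [h.le_add i hi j hj])

variable (b) in
theorem exists_isOptimalCover_least [Fintype N] [Fintype M] [DecidableEq N] [DecidableEq M] :
    ∃ π p, IsOptimalCover b univ univ π p ∧ (∀ i, π i = vcgDiscount b univ univ i) ∧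
      ∀ π' p', IsOptimalCover b univ univ π' p' → π' ≤ π ∧ p ≤ p' := by
  obtain ⟨π, p, hopt, hvcg⟩ := (hasVCGCover_and_flip b univ univ).1
  have hπ (i : N) : π i = vcgDiscount b univ univ i :=
    le_antisymm (hopt.le_vcgDiscount (mem_univ i)) (hvcg i (mem_univ i))
  have hle (π' : N → ℝ) (p' : M → ℝ) (h : IsOptimalCover b univ univ π' p') : π' ≤ π :=
    fun i => (hπ i).symm ▸ h.le_vcgDiscount (mem_univ i)
  have htight : IsOptimalCover b univ univ π (tightPrice b univ π) := by
    refine (isCover_tightPrice hopt.nonneg_left).isOptimalCover ?_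
    rw [← hopt.cost_eq]
    exact add_le_add le_rfl (sum_le_sum fun j _ => hopt.tightPrice_le (mem_univ j))
  exact ⟨π, tightPrice b univ π, htight, hπ, fun π' p' h =>
    ⟨hle π' p' h, fun j => (h.toIsCover.mono_left (hle π' p' h)).tightPrice_le (mem_univ j)⟩⟩

end Assignment

open Assignment

section DualProgram

variable [Fintype N] [Fintype M] {b : N → M → ℝ} {π μ : N → ℝ} {p : M → ℝ}

theorem dualObj_eq_coverCost : DualObj π p = coverCost univ univ π p :=
  add_comm _ _

theorem DualFeasible.isCover (h : DualFeasible b π μ p) : IsCover b univ univ π p :=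
  ⟨h.1, h.2.2.1, fun i _ j _ => by linarith [h.2.2.2 i j, h.2.1 i]⟩

theorem Assignment.IsCover.dualFeasible (h : IsCover b univ univ π p) : DualFeasible b π 0 p :=
  ⟨h.nonneg_left, fun _ => le_rfl, h.nonneg_right, fun i j => by
    simpa using h.le_add i (mem_univ i) j (mem_univ j)⟩

theorem Assignment.IsOptimalCover.dualOptimal (h : IsOptimalCover b univ univ π p) :
    DualOptimal b π 0 p :=
  ⟨h.toIsCover.dualFeasible, fun _ _ _ h' => by
    rw [dualObj_eq_coverCost, dualObj_eq_coverCost, h.cost_eq]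
    exact h'.isCover.matchVal_le⟩

theorem DualOptimal.isOptimalCover {π₀ : N → ℝ} {p₀ : M → ℝ} (h : DualOptimal b π μ p)
    (h₀ : IsOptimalCover b univ univ π₀ p₀) : IsOptimalCover b univ univ π p :=
  h.1.isCover.isOptimalCover <| by
    rw [← dualObj_eq_coverCost, ← h₀.cost_eq, ← dualObj_eq_coverCost]
    exact h.2 _ _ _ h₀.toIsCover.dualFeasible

end DualProgram

theorem stmt17_general [Fintype N] [DecidableEq N] [Fintype M] (b : N → M → ℝ) :
    ∃ (π' μ' : N → ℝ) (p' : M → ℝ),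
      DualOptimal b π' μ' p' ∧
      (∀ π μ p, DualOptimal b π μ p →
        (∀ i, π i ≤ π' i) ∧ (∀ i, μ' i ≤ μ i) ∧ (∀ j, p' j ≤ p j)) ∧
      ∀ (i : N) (rN ri : ℝ), AVal b univ ∅ rN → AVal b (univ \ {i}) ∅ ri →
        π' i = rN - ri := by
  classical
  obtain ⟨π', p', hopt, hvcg, hleast⟩ := exists_isOptimalCover_least b
  refine ⟨π', 0, p', hopt.dualOptimal, fun π μ p h => ?_, fun i rN ri hN hi => ?_⟩
  · obtain ⟨hπ, hp⟩ := hleast π p (h.isOptimalCover hopt)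
    exact ⟨hπ, h.1.2.1, hp⟩
  · rw [hvcg, hN.eq_matchVal, hi.eq_matchVal, sdiff_singleton_eq_erase, vcgDiscount]

/-- there is an optimal dual solution that is the smallest element of the
lattice of optimal dual solutions (largest discounts, smallest raises and prices), and at
this solution each `π i` equals agent `i`'s VCG discount `V_w(N) - V_w(N \ {i})`. -/
theorem stmt17 [Fintype N] [DecidableEq N] [Fintype M] [Nonempty M]
    (hmn : Fintype.card M ≤ Fintype.card N)
    (b : N → M → ℝ) (hb : ∀ i j, 0 ≤ b i j) :
    ∃ (π' μ' : N → ℝ) (p' : M → ℝ),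
      DualOptimal b π' μ' p' ∧
      (∀ π μ p, DualOptimal b π μ p →
        (∀ i, π i ≤ π' i) ∧ (∀ i, μ' i ≤ μ i) ∧ (∀ j, p' j ≤ p j)) ∧
      ∀ (i : N) (rN ri : ℝ), AVal b univ ∅ rN → AVal b (univ \ {i}) ∅ ri →
        π' i = rN - ri :=
  stmt17_general b
end
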